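/- There exists an absolute constant C > 0 such that: if N ≥ 2, H ≥ 1, and {N+1,…,N+H} is an interval whose product (N+1)⋯(N+H) has the same squarefree component as a! for some natural number a with 1 ≤ a < N, then H ≤ N and a ≤ C·H·log N. -/

import Mathlib

/-- The product `(N+1) ⋯ (N+H)`. -/
def intervalProd (N H : ℕ) : ℕ := ∏ i ∈ Finset.Icc 1 H, (N + i)

/-- The squarefree component of `n`: the squarefree number `s` such that `n = s·m²`
(the product of primes dividing `n` to an odd power). -/
def sqfreePart (n : ℕ) : ℕ := ∏ p ∈ n.primeFactors, p ^ (n.factorization p % 2)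

/-- The interval `{N+1, …, N+H}` is of type `F₃`: its product has the same squarefree
component as `a!` for some `1 ≤ a < N`. -/
def IsF3Interval (N H : ℕ) : Prop :=
  1 ≤ H ∧ ∃ a : ℕ, 1 ≤ a ∧ a < N ∧
    sqfreePart (intervalProd N H) = sqfreePart (Nat.factorial a)

/-- `ℱ₃`: natural numbers of the form `N+H` for some type `F₃` interval `{N+1,…,N+H}`. -/
def F3 : Set ℕ := {n | ∃ N H : ℕ, IsF3Interval N H ∧ n = N + H}

/-- `ℱ₃¹`: natural numbers `n` with `s(n) = s(a!)` for some `1 ≤ a < n - 1`. -/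
def F31 : Set ℕ :=
  {n | ∃ a : ℕ, 1 ≤ a ∧ a + 1 < n ∧ sqfreePart n = sqfreePart (Nat.factorial a)}

/-- The number of elements of `S` in `[1, x]`. -/
noncomputable def countIn (S : Set ℕ) (x : ℝ) : ℕ :=
  Set.ncard {n : ℕ | n ∈ S ∧ 1 ≤ n ∧ (n : ℝ) ≤ x}

/-!
If `H > N`, Bertrand's postulate gives a prime `q` with `N < q ≤ N + H < 2q`. It divides
`(N+1)⋯(N+H) = (N+H)!/N!` exactly once, hence divides its squarefree part `s(a!)`, forcing
`q ≤ a < N`, a contradiction.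

Likewise every prime `p ∈ (a/2, a]` divides `a!` exactly once, hence divides `s(a!)` and so the
product `(N+1)⋯(N+H) ≤ N^(2H)`. Erdős' estimate of the central binomial coefficient (the one
behind Bertrand's postulate) shows `4ⁿ ≤ n (2n)^√(2n) 4^(2n/3) ∏_{n < p ≤ 2n} p`, so the primes
in `(n, 2n]` have product at least `e^(n/5)` for large `n`. With `n = ⌊a/2⌋` this gives
`a ≪ H log N`.
-/

open Finset
open scoped Nat

section

open Nat

lemma sqfreePart_dvd (n : ℕ) : sqfreePart n ∣ n := by
  rcases eq_or_ne n 0 with rfl | hn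
  · exact dvd_zero _
  · conv_rhs => rw [← Nat.prod_factorization_pow_eq_self hn]
    rw [Finsupp.prod, Nat.support_factorization]
    exact prod_dvd_prod_of_dvd _ _ fun p _ => pow_dvd_pow p (Nat.mod_le _ _)

lemma Nat.Prime.dvd_sqfreePart {p n : ℕ} (hp : p.Prime) (hn : n ≠ 0)
    (hodd : Odd (n.factorization p)) : p ∣ sqfreePart n := by
  have hmem : p ∈ n.primeFactors :=
    Nat.mem_primeFactors.2 ⟨hp, Nat.dvd_of_factorization_pos hodd.pos.ne', hn⟩
  have := dvd_prod_of_mem (fun q => q ^ (n.factorization q % 2)) hmem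
  rwa [Nat.odd_iff.1 hodd, pow_one] at this

lemma Nat.Prime.dvd_of_sqfreePart_eq {p m k : ℕ} (hp : p.Prime) (hm : m ≠ 0)
    (hodd : Odd (m.factorization p)) (h : sqfreePart m = sqfreePart k) : p ∣ k :=
  (h ▸ hp.dvd_sqfreePart hm hodd).trans (sqfreePart_dvd k)

lemma factorization_factorial_eq_one_of_lt_two_mul {p a : ℕ} (hp : p.Prime) (hpa : p ≤ a)
    (ha : a < 2 * p) :
    (a !).factorization p = 1 := by
  have hlog : Nat.log p a < 2 := Nat.log_lt_of_lt_pow (by omega) <|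
    ha.trans_le (by rw [sq]; exact Nat.mul_le_mul_right p hp.two_le)
  rw [factorization_factorial hp hlog, Nat.Ico_succ_singleton, sum_singleton, pow_one]
  exact Nat.div_eq_of_lt_le (by omega) (by omega)

lemma intervalProd_eq_ascFactorial (N H : ℕ) : intervalProd N H = (N + 1).ascFactorial H := by
  induction H with
  | zero => rfl
  | succ H ih =>
    rw [intervalProd, prod_Icc_succ_top (by omega), ← intervalProd, ih, ascFactorial_succ]
    ring

lemma factorial_mul_intervalProd (N H : ℕ) : N ! * intervalProd N H = (N + H)! := by
  rw [intervalProd_eq_ascFactorial, factorial_mul_ascFactorial]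

lemma intervalProd_ne_zero (N H : ℕ) : intervalProd N H ≠ 0 := by
  rw [intervalProd_eq_ascFactorial]; exact (ascFactorial_pos _ _).ne'

lemma intervalProd_le_pow (N H : ℕ) : intervalProd N H ≤ (N + H) ^ H := by
  rw [intervalProd_eq_ascFactorial]; exact ascFactorial_le_pow_add N H

lemma factorization_intervalProd_eq_one {N H q : ℕ} (hq : q.Prime) (hNq : N < q)
    (hq2 : q ≤ N + H) (h2q : N + H < 2 * q) : (intervalProd N H).factorization q = 1 := by
  have h := congrArg (·.factorization q) (factorial_mul_intervalProd N H)
  simpa only [Nat.factorization_mul (factorial_ne_zero N) (intervalProd_ne_zero N H),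
    Finsupp.add_apply, factorization_factorial_eq_zero_of_lt hNq,
    factorization_factorial_eq_one_of_lt_two_mul hq hq2 h2q, zero_add] using h

theorem le_of_sqfreePart_intervalProd_eq {N H a : ℕ} (haN : a < N)
    (h : sqfreePart (intervalProd N H) = sqfreePart a !) : H ≤ N := by
  by_contra! hNH
  obtain ⟨q, hq, hq1, hq2⟩ := exists_prime_lt_and_le_two_mul ((N + H) / 2) (by omega)
  have hodd : Odd ((intervalProd N H).factorization q) := by
    rw [factorization_intervalProd_eq_one hq (by omega) (by omega) (by omega)]; exact odd_one
  have hqa : q ≤ a :=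
    hq.dvd_factorial.1 (hq.dvd_of_sqfreePart_eq (intervalProd_ne_zero N H) hodd h)
  omega

lemma prod_primes_Ioc_half_dvd {m a : ℕ} (hm : sqfreePart (a !) = sqfreePart m) :
    ∏ p ∈ Ioc (a / 2) a with p.Prime, p ∣ m := by
  refine prod_primes_dvd m (fun p hp => (mem_filter.1 hp).2.prime) fun p hp => ?_
  obtain ⟨hpa, hp⟩ := mem_filter.1 hp
  rw [mem_Ioc] at hpa
  have hodd : Odd ((a !).factorization p) := by
    rw [factorization_factorial_eq_one_of_lt_two_mul hp hpa.2 (by omega)]; exact odd_one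
  exact hp.dvd_of_sqfreePart_eq (factorial_ne_zero a) hodd hm

theorem prod_primes_Ioc_half_le_pow {N H a : ℕ} (hN : 2 ≤ N) (haN : a < N)
    (h : sqfreePart (intervalProd N H) = sqfreePart a !) :
    ∏ p ∈ Ioc (a / 2) a with p.Prime, p ≤ N ^ (2 * H) :=
  calc ∏ p ∈ Ioc (a / 2) a with p.Prime, p
      ≤ intervalProd N H :=
        Nat.le_of_dvd (Nat.pos_of_ne_zero (intervalProd_ne_zero N H))
          (prod_primes_Ioc_half_dvd h.symm)
    _ ≤ (N + H) ^ H := intervalProd_le_pow N H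
    _ ≤ (N * N) ^ H := by
        have := le_of_sqfreePart_intervalProd_eq haN h
        gcongr; nlinarith
    _ = N ^ (2 * H) := by rw [← sq, ← pow_mul]

theorem prod_range_pow_factorization_centralBinom_le {n : ℕ} (hn : 0 < n) (m : ℕ) :
    ∏ p ∈ range (m + 1), p ^ (centralBinom n).factorization p ≤
      (2 * n) ^ Nat.sqrt (2 * n) * 4 ^ m := by
  set f : ℕ → ℕ := fun p => p ^ (centralBinom n).factorization p
  set S := {p ∈ range (m + 1) | p.Prime}
  have hS : ∏ p ∈ S, f p = ∏ p ∈ range (m + 1), f p := by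
    refine prod_filter_of_ne fun p _ h => ?_
    contrapose! h
    simp [f, factorization_eq_zero_of_not_prime _ h]
  rw [← hS, ← prod_filter_mul_prod_filter_not S (· ≤ Nat.sqrt (2 * n))]
  refine Nat.mul_le_mul ?small ?large
  case small =>
    calc ∏ p ∈ S with p ≤ Nat.sqrt (2 * n), f p
        ≤ ∏ p ∈ S with p ≤ Nat.sqrt (2 * n), 2 * n :=
          prod_le_prod' fun p _ => pow_factorization_choose_le (by omega)
      _ ≤ (2 * n) ^ Nat.sqrt (2 * n) := by
          rw [prod_const]
          refine pow_right_mono₀ (by omega)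
            ((card_le_card fun p hp => ?_).trans (card_Icc 1 _).le)
          obtain ⟨hpS, hp⟩ := mem_filter.1 hp
          exact mem_Icc.2 ⟨(mem_filter.1 hpS).2.one_lt.le, hp⟩
  case large =>
    calc ∏ p ∈ S with ¬p ≤ Nat.sqrt (2 * n), f p
        ≤ ∏ p ∈ S with ¬p ≤ Nat.sqrt (2 * n), p := by
          refine prod_le_prod' fun p hp => ?_
          obtain ⟨hpS, hp⟩ := mem_filter.1 hp
          have hv : (centralBinom n).factorization p ≤ 1 :=
            factorization_choose_le_one (Nat.sqrt_lt'.1 (not_le.1 hp))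
          exact (pow_le_pow_right₀ (mem_filter.1 hpS).2.one_le hv).trans_eq (pow_one p)
      _ ≤ primorial m :=
          prod_le_prod_of_subset_of_one_le' (filter_subset _ _)
            fun p hp _ => (mem_filter.1 hp).2.one_lt.le
      _ ≤ 4 ^ m := primorial_le_four_pow m

theorem prod_Ico_pow_factorization_centralBinom_le {n : ℕ} (hn : 2 < n) :
    ∏ p ∈ Ico (2 * n / 3 + 1) (2 * n + 1), p ^ (centralBinom n).factorization p ≤
      ∏ p ∈ Ioc n (2 * n) with p.Prime, p := by
  calc ∏ p ∈ Ico (2 * n / 3 + 1) (2 * n + 1), p ^ (centralBinom n).factorization p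
      ≤ ∏ p ∈ Ico (2 * n / 3 + 1) (2 * n + 1), if p.Prime ∧ n < p then p else 1 := by
        refine prod_le_prod' fun p hp => ?_
        rw [mem_Ico] at hp
        split_ifs with h
        · have h2n : 2 * n < p ^ 2 := by nlinarith [h.2]
          have hv : (centralBinom n).factorization p ≤ 1 := factorization_choose_le_one h2n
          exact (pow_le_pow_right₀ h.1.one_le hv).trans_eq (pow_one p)
        · suffices (centralBinom n).factorization p = 0 by simp [this]
          by_cases hp' : p.Prime
          · exact factorization_centralBinom_of_two_mul_self_lt_three_mul hn
              (not_lt.1 fun hnp => h ⟨hp', hnp⟩) (by omega)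
          · exact factorization_eq_zero_of_not_prime _ hp'
    _ = ∏ p ∈ Ioc n (2 * n) with p.Prime, p := by
        rw [← prod_filter]
        congr 1
        ext p
        simp only [mem_filter, mem_Ico, mem_Ioc]
        grind

theorem centralBinom_le_mul_prod_primes_Ioc {n : ℕ} (hn : 2 < n) :
    centralBinom n ≤ (2 * n) ^ Nat.sqrt (2 * n) * 4 ^ (2 * n / 3) *
      ∏ p ∈ Ioc n (2 * n) with p.Prime, p := by
  rw [← prod_pow_factorization_centralBinom,
    ← prod_range_mul_prod_Ico _ (show 2 * n / 3 + 1 ≤ 2 * n + 1 by omega)]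
  exact Nat.mul_le_mul (prod_range_pow_factorization_centralBinom_le (by omega) _)
    (prod_Ico_pow_factorization_centralBinom_le hn)

end

open Real Filter Asymptotics

lemma isLittleO_sqrt_mul_log : (fun x : ℝ => √x * log x) =o[atTop] id := by
  have h :=
    (isBigO_refl Real.sqrt atTop).mul_isLittleO (isLittleO_log_rpow_atTop one_half_pos)
  refine h.congr' EventuallyEq.rfl ?_
  filter_upwards [eventually_ge_atTop 0] with x hx
  rw [← sqrt_eq_rpow, mul_self_sqrt hx, id]

lemma isLittleO_log_add_sqrt_two_mul_mul_log :
    (fun x : ℝ => log x + √(2 * x) * log (2 * x)) =o[atTop] id := by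
  have h := isLittleO_sqrt_mul_log.comp_tendsto (tendsto_id.const_mul_atTop two_pos)
  exact isLittleO_log_id_atTop.add (h.trans_isBigO (isBigO_const_mul_self 2 id atTop))

theorem eventually_le_log_prod_primes_Ioc :
    ∀ᶠ n : ℕ in atTop, (n : ℝ) ≤ 5 * log ↑(∏ p ∈ Ioc n (2 * n) with p.Prime, p) := by
  have hsmall := tendsto_natCast_atTop_atTop.eventually
    (isLittleO_log_add_sqrt_two_mul_mul_log.bound (c := 1 / 20) (by norm_num))
  filter_upwards [hsmall, eventually_ge_atTop 4] with n hsmall hn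
  set P := ∏ p ∈ Ioc n (2 * n) with p.Prime, p
  have hchain : 4 ^ n ≤ n * ((2 * n) ^ Nat.sqrt (2 * n) * 4 ^ (2 * n / 3) * P) :=
    (Nat.four_pow_lt_mul_centralBinom n hn).le.trans
      (Nat.mul_le_mul_left n (centralBinom_le_mul_prod_primes_Ioc (by omega)))
  have hP : (0 : ℝ) < P := by
    exact_mod_cast prod_pos fun p hp => Nat.Prime.pos (mem_filter.1 hp).2
  have hn4 : (4 : ℝ) ≤ n := by exact_mod_cast hn
  have hn0 : (0 : ℝ) < n := by positivity
  have hlog := Real.log_le_log (by positivity) (Nat.cast_le.2 hchain)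
  push_cast at hlog
  rw [log_pow, log_mul hn0.ne' (by positivity), log_mul (by positivity) hP.ne',
    log_mul (by positivity) (by positivity), log_pow, log_pow] at hlog
  have hsqrt : (Nat.sqrt (2 * n) : ℝ) * log (2 * n) ≤ √(2 * n) * log (2 * n) := by
    refine mul_le_mul_of_nonneg_right ?_ (log_nonneg (by linarith))
    exact_mod_cast Real.nat_sqrt_le_real_sqrt
  have hdiv : ((2 * n / 3 : ℕ) : ℝ) * log 4 ≤ 2 * n / 3 * log 4 := by
    refine mul_le_mul_of_nonneg_right ?_ (log_nonneg (by norm_num))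
    exact Nat.cast_div_le.trans (by push_cast; rfl)
  have hlog4 : 1.38 < log 4 := by
    rw [show (4 : ℝ) = 2 ^ 2 by norm_num, log_pow]; linarith [log_two_gt_d9]
  rw [Real.norm_eq_abs, Real.norm_eq_abs, id, abs_of_pos hn0] at hsmall
  -- `log 4 / 3 - 1 / 20 > 1 / 5`
  nlinarith [le_abs_self (log n + √(2 * n) * log (2 * n))]

theorem log_prod_primes_Ioc_le {N H a : ℕ} (hN : 2 ≤ N) (haN : a < N)
    (h : sqfreePart (intervalProd N H) = sqfreePart a !) :
    log ↑(∏ p ∈ Ioc (a / 2) (2 * (a / 2)) with p.Prime, p) ≤ 2 * H * log N := by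
  have hsub : Ioc (a / 2) (2 * (a / 2)) ⊆ Ioc (a / 2) a := Ioc_subset_Ioc le_rfl (by omega)
  have hle : ∏ p ∈ Ioc (a / 2) (2 * (a / 2)) with p.Prime, p ≤ N ^ (2 * H) :=
    (prod_le_prod_of_subset_of_one_le' (filter_subset_filter _ hsub)
      fun p hp _ => Nat.Prime.one_le (mem_filter.1 hp).2).trans
      (prod_primes_Ioc_half_le_pow hN haN h)
  have hpos : (0 : ℝ) < ↑(∏ p ∈ Ioc (a / 2) (2 * (a / 2)) with p.Prime, p) :=
    Nat.cast_pos.2 (prod_pos fun p hp => Nat.Prime.pos (mem_filter.1 hp).2)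
  calc _ ≤ log ((N : ℝ) ^ (2 * H)) := log_le_log hpos (by exact_mod_cast hle)
    _ = 2 * H * log N := by rw [log_pow]; push_cast; ring

theorem stmt_12 :
    ∃ C : ℝ, 0 < C ∧ ∀ N H a : ℕ, 2 ≤ N → 1 ≤ H → 1 ≤ a → a < N →
      sqfreePart (intervalProd N H) = sqfreePart (Nat.factorial a) →
      H ≤ N ∧ (a : ℝ) ≤ C * (H : ℝ) * Real.log N := by
  obtain ⟨n₀, hn₀⟩ := eventually_atTop.1 eventually_le_log_prod_primes_Ioc
  refine ⟨4 * n₀ + 22, by positivity, fun N H a hN hH _ haN h => ?_⟩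
  refine ⟨le_of_sqfreePart_intervalProd_eq haN h, ?_⟩
  have hlogN : 1 / 2 ≤ log N :=
    (log_two_gt_d9.trans_le' (by norm_num)).le.trans (log_le_log two_pos (by exact_mod_cast hN))
  have hHlogN : 1 / 2 ≤ (H : ℝ) * log N := by
    nlinarith [show (1 : ℝ) ≤ H by exact_mod_cast hH]
  rcases lt_or_ge (a / 2) n₀ with hsmall | hlarge
  · have ha : (a : ℝ) ≤ 2 * n₀ + 1 := by exact_mod_cast (show a ≤ 2 * n₀ + 1 by omega)
    nlinarith
  · have hP := hn₀ (a / 2) hlarge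
    have hlogP := log_prod_primes_Ioc_le hN haN h
    have ha : (a : ℝ) ≤ 2 * ↑(a / 2) + 1 := by
      exact_mod_cast (show a ≤ 2 * (a / 2) + 1 by omega)
    nlinarith
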